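/- If ∂[ω₁ : ⋯ : ω_p] = 0, then the one-forms ω₁, …, ω_p are linearly dependent over F; equivalently, ω₁ ∧ ω₂ ∧ ⋯ ∧ ω_p = 0. -/

import Mathlib

open ExteriorAlgebra

noncomputable def wedgeList (F : Type*) {W : Type*} [Field F] [AddCommGroup W] [Module F W]
    (l : List W) : ExteriorAlgebra F W := (l.map (ι F)).prod

noncomputable def wedge (F : Type*) {W : Type*} [Field F] [AddCommGroup W] [Module F W]
    {p : ℕ} (ω : Fin p → W) : ExteriorAlgebra F W := wedgeList F (List.ofFn ω)

noncomputable def der (F : Type*) {W : Type*} [Field F] [AddCommGroup W] [Module F W]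
    {p : ℕ} (ω : Fin p → W) : ExteriorAlgebra F W :=
  ∑ k : Fin p, (-1 : F) ^ (k : ℕ) • wedgeList F ((List.ofFn ω).eraseIdx k)

/-!
Multiplying `∂[ω₁ : ⋯ : ω_p]` on the left by `ω₁` kills every term except the first, since each
of the others already contains `ω₁`; hence `ω₁ ∧ ∂[ω₁ : ⋯ : ω_p] = ω₁ ∧ ⋯ ∧ ω_p`, and this wedge
vanishes when `∂` does. Conversely, the wedge of a linearly independent family is a member of a
basis of the exterior power of their span, so it is nonzero.
-/

section

variable {F W : Type*} [Field F] [AddCommGroup W] [Module F W]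

@[simp]
theorem wedgeList_cons (a : W) (l : List W) : wedgeList F (a :: l) = ι F a * wedgeList F l := by
  simp [wedgeList]

theorem ι_mul_wedgeList_cons_self (a : W) (l : List W) : ι F a * wedgeList F (a :: l) = 0 := by
  rw [wedgeList_cons, ← mul_assoc, ι_sq_zero, zero_mul]

theorem ι_mul_der {n : ℕ} (ω : Fin (n + 1) → W) : ι F (ω 0) * der F ω = wedge F ω := by
  have hvanish (k : Fin n) :
      ι F (ω 0) * wedgeList F ((List.ofFn ω).eraseIdx k.succ) = 0 := by
    rw [List.ofFn_succ, Fin.val_succ, List.eraseIdx_cons_succ, ι_mul_wedgeList_cons_self]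
  rw [der, Finset.mul_sum, Fin.sum_univ_succ]
  simp only [mul_smul_comm, hvanish, smul_zero, Finset.sum_const_zero, add_zero]
  simp [wedge, List.ofFn_succ]

theorem wedge_eq_ιMulti {p : ℕ} (ω : Fin p → W) : wedge F ω = ιMulti F p ω := by
  rw [ιMulti_apply, wedge, wedgeList, List.map_ofFn]
  rfl

theorem wedge_ne_zero_of_linearIndependent {p : ℕ} {ω : Fin p → W}
    (hω : LinearIndependent F ω) : wedge F ω ≠ 0 := by
  have h := (exteriorPower.ιMulti_family_linearIndependent_field (n := p) hω).ne_zero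
    (Set.powersetCard.ofFinEmbEquiv (RelEmbedding.refl (· ≤ ·)))
  rw [Ne, ← Submodule.coe_eq_zero] at h
  simpa [ExteriorAlgebra.ιMulti_family, wedge_eq_ιMulti] using h

end

theorem der_eq_zero_dependent_general {F W : Type*} [Field F] [AddCommGroup W] [Module F W]
    {n : ℕ} (ω : Fin (n + 2) → W) (h : der F ω = 0) :
    ¬ LinearIndependent F ω ∧ wedge F ω = 0 := by
  have hwedge : wedge F ω = 0 := by
    rw [← ι_mul_der ω, h, mul_zero]
  exact ⟨fun hω => wedge_ne_zero_of_linearIndependent hω hwedge, hwedge⟩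

/-- If `∂[ω₁:⋯:ω_p] = 0` then `ω₁, …, ω_p` are linearly dependent;
equivalently `ω₁ ∧ ⋯ ∧ ω_p = 0`. -/
theorem der_eq_zero_dependent {F W : Type*} [Field F] [CharZero F] [AddCommGroup W] [Module F W]
    {n : ℕ} (ω : Fin (n + 2) → W) (h : der F ω = 0) :
    ¬ LinearIndependent F ω ∧ wedge F ω = 0 :=
  der_eq_zero_dependent_general ω h
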